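/- arXiv:1210.0996 — 2 statements merged into one kernel-verified Lean document; each statement's English description precedes it below -/
import Mathlib

section
/- Let k be a field. A chain map f : C → D of non-negatively graded chain complexes over k such that f_l : C_l → D_l is surjective for every l ≥ 1 has the right lifting property with respect to the map j^p : 0 → D^p for every p ≥ 1. -/
open CategoryTheory Limits

/-!
The complex `D^p` is contractible, so every map `g : D^p ⟶ D` is null-homotopic. The components of
a null-homotopy of a map of chain complexes land in positive degrees, where `f` is surjective, and
they start at vector spaces, which are projective; so they lift along `f`, and the lifted homotopy
gives a chain map `D^p ⟶ C` lifting `g`.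
-/

lemma hasLiftingProperty_of_isZero_left {V : Type*} [Category V] {A B X Y : V} (i : A ⟶ B)
    (p : X ⟶ Y) (hA : IsZero A) (h : ∀ g : B ⟶ Y, ∃ l : B ⟶ X, l ≫ p = g) :
    HasLiftingProperty i p where
  sq_hasLift {u} {g} _ := by
    obtain ⟨l, hl⟩ := h g
    exact ⟨⟨⟨l, hA.eq_of_src _ _, hl⟩⟩⟩

section

variable {V : Type*} [Category V] [Preadditive V]

lemma Homotopy.nullHomotopicMap'_hom {ι : Type*} {c : ComplexShape ι}
    {K D : HomologicalComplex V c} {g : K ⟶ D} (H : Homotopy g 0) :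
    Homotopy.nullHomotopicMap' (fun i j _ => H.hom i j) = g := by
  classical
  have hhom : (fun i j => if hij : c.Rel j i then H.hom i j else 0) = H.hom := by
    funext i j
    split_ifs with hij
    · rfl
    · exact (H.zero i j hij).symm
  ext n
  rw [H.comm n, Homotopy.nullHomotopicMap', hhom]
  simp [Homotopy.nullHomotopicMap]

namespace ChainComplex

noncomputable def homotopyIdZeroOfIsIsoD (K : ChainComplex V ℕ) (q : ℕ)
    (hK : ∀ l, l ≠ q + 1 → l ≠ q → IsZero (K.X l)) [IsIso (K.d (q + 1) q)] :
    Homotopy (𝟙 K) 0 where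
  hom i j :=
    if h : i = q ∧ j = q + 1 then
      eqToHom (congrArg K.X h.1) ≫ inv (K.d (q + 1) q) ≫ eqToHom (congrArg K.X h.2.symm)
    else 0
  zero i j hij := dif_neg (by rintro ⟨rfl, rfl⟩; exact hij rfl)
  comm n := by
    rw [dNext_nat, Homotopy.prevD_chainComplex]
    by_cases hn₁ : n = q + 1
    · subst hn₁
      simp
    by_cases hn₀ : n = q
    · subst hn₀
      simp
    exact (hK n hn₁ hn₀).eq_of_src _ _

lemma exists_lift_of_homotopy_zero {K C D : ChainComplex V ℕ} [∀ n, Projective (K.X n)]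
    (f : C ⟶ D) [∀ n, Epi (f.f (n + 1))] {g : K ⟶ D} (H : Homotopy g 0) :
    ∃ φ : K ⟶ C, φ ≫ f = g := by
  have hlift : ∀ i j, (ComplexShape.down ℕ).Rel j i →
      ∃ h : K.X i ⟶ C.X j, h ≫ f.f j = H.hom i j := by
    rintro i _ rfl
    exact ⟨Projective.factorThru _ _, Projective.factorThru_comp _ _⟩
  choose h hh using hlift
  refine ⟨Homotopy.nullHomotopicMap' h, ?_⟩
  rw [Homotopy.nullHomotopicMap'_comp]
  simp_rw [hh]
  exact H.nullHomotopicMap'_hom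

end ChainComplex

end

theorem stmt_6_general (k : Type) [Field k]
    (C D : ChainComplex (ModuleCat k) ℕ) (f : C ⟶ D)
    (hf : ∀ l, 1 ≤ l → Function.Surjective (f.f l))
    (p : ℕ) (hp : 1 ≤ p)
    (Z Dp : ChainComplex (ModuleCat k) ℕ)
    (hZ : ∀ n, IsZero (Z.X n))
    (hzero : ∀ l, l ≠ p → l ≠ p - 1 → IsZero (Dp.X l))
    (hd : IsIso (Dp.d p (p - 1)))
    (j : Z ⟶ Dp) :
    HasLiftingProperty j f := by
  obtain ⟨q, rfl⟩ := Nat.exists_eq_add_of_le' hp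
  simp only [Nat.add_sub_cancel] at hzero
  have : IsIso (Dp.d (q + 1) q) := hd
  have : ∀ n, Epi (f.f (n + 1)) := fun n =>
    (ModuleCat.epi_iff_surjective _).2 (hf (n + 1) (by omega))
  have hZero : IsZero Z := by
    rw [IsZero.iff_id_eq_zero]
    exact HomologicalComplex.hom_ext _ _ fun n => (hZ n).eq_of_src _ _
  refine hasLiftingProperty_of_isZero_left j f hZero fun g => ?_
  exact ChainComplex.exists_lift_of_homotopy_zero f
    (((ChainComplex.homotopyIdZeroOfIsIsoD Dp q hzero).compRight g).trans (.ofEq zero_comp))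

/-- Let `k` be a field.  A chain map `f : C ⟶ D` of non-negatively
graded chain complexes over `k` such that `f_l : C_l → D_l` is surjective for every
`l ≥ 1` has the right lifting property with respect to the map `j^p : 0 → D^p` for
every `p ≥ 1`.  Here `D^p` is the complex with `k` in degrees `p` and `p - 1` and the
identity (an isomorphism) as differential between them, and `j^p` is the unique map
from the zero complex. -/
theorem stmt_6 (k : Type) [Field k]
    (C D : ChainComplex (ModuleCat k) ℕ) (f : C ⟶ D)
    (hf : ∀ l, 1 ≤ l → Function.Surjective (f.f l))
    (p : ℕ) (hp : 1 ≤ p)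
    (Z Dp : ChainComplex (ModuleCat k) ℕ)
    (hZ : ∀ n, IsZero (Z.X n))
    (hXp : Dp.X p = ModuleCat.of k k)
    (hXp' : Dp.X (p - 1) = ModuleCat.of k k)
    (hzero : ∀ l, l ≠ p → l ≠ p - 1 → IsZero (Dp.X l))
    (hd : IsIso (Dp.d p (p - 1)))
    (j : Z ⟶ Dp) :
    HasLiftingProperty j f :=
  stmt_6_general k C D f hf p hp Z Dp hZ hzero hd j
end

section
/- In a left proper model category M, for any weak equivalence f : X → Y, the adjunction between under categories P_f : X/M ⇄ Y/M : U_f, where P_f(Z) = Y ∪_X Z (pushout along f) and U_f precomposes with f, is a Quillen equivalence. -/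
open CategoryTheory Limits

universe v u

/-- A (Quillen) model structure on a category `M`: three classes of morphisms — weak
equivalences, fibrations and cofibrations — satisfying two-out-of-three, closure
under retracts, the lifting axioms, and the factorization axioms. -/
structure ModelStructure (M : Type u) [Category.{v} M] : Type (max u v) where
  W : MorphismProperty M
  Fib : MorphismProperty M
  Cof : MorphismProperty M
  two_of_three : ∀ {X Y Z : M} (f : X ⟶ Y) (g : Y ⟶ Z),
    (W f → W g → W (f ≫ g)) ∧ (W f → W (f ≫ g) → W g) ∧ (W g → W (f ≫ g) → W f)
  retract_stable : ∀ {A B C D : M} (f : A ⟶ B) (g : C ⟶ D)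
    (i : A ⟶ C) (r : C ⟶ A) (j : B ⟶ D) (s : D ⟶ B),
    i ≫ r = 𝟙 A → j ≫ s = 𝟙 B → i ≫ g = f ≫ j → g ≫ s = r ≫ f →
    (W g → W f) ∧ (Fib g → Fib f) ∧ (Cof g → Cof f)
  lift_trivCof_fib : ∀ {A B X Y : M} (i : A ⟶ B) (p : X ⟶ Y),
    Cof i → W i → Fib p → HasLiftingProperty i p
  lift_cof_trivFib : ∀ {A B X Y : M} (i : A ⟶ B) (p : X ⟶ Y),
    Cof i → Fib p → W p → HasLiftingProperty i p
  fact_cof_trivFib : ∀ {X Y : M} (f : X ⟶ Y),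
    ∃ (Z : M) (i : X ⟶ Z) (p : Z ⟶ Y), Cof i ∧ Fib p ∧ W p ∧ i ≫ p = f
  fact_trivCof_fib : ∀ {X Y : M} (f : X ⟶ Y),
    ∃ (Z : M) (i : X ⟶ Z) (p : Z ⟶ Y), Cof i ∧ W i ∧ Fib p ∧ i ≫ p = f

variable {M : Type u} [Category.{v} M]

/-- A model structure is left proper if the pushout of a weak equivalence along a
cofibration is again a weak equivalence. -/
def LeftProper (S : ModelStructure M) : Prop :=
  ∀ {A B C D : M} (w : A ⟶ B) (c : A ⟶ C) (x : B ⟶ D) (w' : C ⟶ D),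
    IsPushout w c x w' → S.W w → S.Cof c → S.W w'

/-- The comma (under-category) model structure on `Under X` induced by a model
structure on `M`: a morphism is a weak equivalence / fibration / cofibration iff its
underlying morphism in `M` is one. -/
def IsCommaStructure (S : ModelStructure M) {X : M} (T : ModelStructure (Under X)) : Prop :=
  (∀ {A B : Under X} (f : A ⟶ B), T.W f ↔ S.W f.right) ∧
  (∀ {A B : Under X} (f : A ⟶ B), T.Fib f ↔ S.Fib f.right) ∧
  (∀ {A B : Under X} (f : A ⟶ B), T.Cof f ↔ S.Cof f.right)

/-- A left adjoint functor between model categories is a left Quillen functor (so the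
adjunction is a Quillen adjunction) if it preserves cofibrations and trivial
cofibrations. -/
def IsLeftQuillen {N : Type u} [Category.{v} N]
    (S : ModelStructure M) (T : ModelStructure N) (F : M ⥤ N) : Prop :=
  (∀ {A B : M} (f : A ⟶ B), S.Cof f → T.Cof (F.map f)) ∧
  (∀ {A B : M} (f : A ⟶ B), S.Cof f → S.W f → T.Cof (F.map f) ∧ T.W (F.map f))

/-
The pushout functor `P_f` is left Quillen because cofibrations and trivial cofibrations are
stable under cobase change, and `P_f` acts on morphisms by cobase change along the
coprojections `A ⟶ Y ⊔_X A`. For cofibrant `A`, the coprojection `A ⟶ Y ⊔_X A` is itself a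
cobase change of the weak equivalence `f` along the cofibration `X ⟶ A`, hence a weak
equivalence by left properness. The adjunct of `g : Y ⊔_X A ⟶ B` is this coprojection followed
by `g`, so two-out-of-three shows that `g` is a weak equivalence iff its adjunct is.
-/

namespace ModelStructure

variable (S : ModelStructure M)

/-- The retract argument: a map that lifts against the second factor of a factorization of
itself is a retract of the first factor. -/
lemma of_factorization_of_hasLiftingProperty {W P E : M} {j : W ⟶ P} (c : W ⟶ E) (p : E ⟶ P)
    (hcp : c ≫ p = j) [HasLiftingProperty j p] :
    (S.W c → S.W j) ∧ (S.Fib c → S.Fib j) ∧ (S.Cof c → S.Cof j) := by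
  have sq : CommSq c j p (𝟙 P) := ⟨by rw [hcp, Category.comp_id]⟩
  exact S.retract_stable j c (𝟙 W) (𝟙 W) sq.lift p (Category.comp_id _) sq.fac_right
    (by rw [Category.id_comp, sq.fac_left]) (by rw [hcp, Category.id_comp])

lemma w_right_iff_w_comp {X Y Z : M} {w : X ⟶ Y} (hw : S.W w) (g : Y ⟶ Z) :
    S.W g ↔ S.W (w ≫ g) :=
  ⟨(S.two_of_three w g).1 hw, (S.two_of_three w g).2.1 hw⟩

variable {S} {Z W V P : M} {a : Z ⟶ W} {i : Z ⟶ V} {j : W ⟶ P} {b : V ⟶ P}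

lemma cof_of_isPushout (sq : IsPushout a i j b) (hi : S.Cof i) : S.Cof j := by
  obtain ⟨E, c, p, hc, hpF, hpW, hcp⟩ := S.fact_cof_trivFib j
  have := S.lift_cof_trivFib i p hi hpF hpW
  have := sq.hasLiftingProperty p
  exact (S.of_factorization_of_hasLiftingProperty c p hcp).2.2 hc

lemma trivCof_of_isPushout (sq : IsPushout a i j b) (hi : S.Cof i) (hiW : S.W i) :
    S.Cof j ∧ S.W j := by
  obtain ⟨E, c, p, hc, hcW, hpF, hcp⟩ := S.fact_trivCof_fib j
  have := S.lift_trivCof_fib i p hi hiW hpF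
  have := sq.hasLiftingProperty p
  have retract := S.of_factorization_of_hasLiftingProperty c p hcp
  exact ⟨retract.2.2 hc, retract.1 hcW⟩

end ModelStructure

namespace Under

variable [HasPushouts M] {X Y : M} (f : X ⟶ Y)

/-- By pasting: the left square and the outer rectangle are both pushouts of `f`. -/
lemma isPushout_pushout_map {A A' : Under X} (g : A ⟶ A') :
    IsPushout (pushout.inl A.hom f) g.right ((Under.pushout f).map g).right
      (pushout.inl A'.hom f) := by
  have hinr : pushout.inr A.hom f ≫ ((Under.pushout f).map g).right =
      pushout.inr A'.hom f :=
    pushout.inr_desc _ _ _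
  have hinl : pushout.inl A.hom f ≫ ((Under.pushout f).map g).right =
      g.right ≫ pushout.inl A'.hom f :=
    pushout.inl_desc _ _ _
  refine IsPushout.of_top ?_ hinl (IsPushout.of_hasPushout A.hom f).flip
  rw [hinr, Under.w g]
  exact (IsPushout.of_hasPushout A'.hom f).flip

lemma mapPushoutAdj_homEquiv_right {A : Under X} {B : Under Y}
    (g : (Under.pushout f).obj A ⟶ B) :
    ((Under.mapPushoutAdj f).homEquiv A B g).right = pushout.inl A.hom f ≫ g.right := by
  simp only [Adjunction.homEquiv_unit, Under.mapPushoutAdj_unit_app]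
  rfl

end Under

lemma isLeftQuillen_under_pushout [HasPushouts M] {S : ModelStructure M} {X Y : M}
    (f : X ⟶ Y) {TX : ModelStructure (Under X)} (hTX : IsCommaStructure S TX)
    {TY : ModelStructure (Under Y)} (hTY : IsCommaStructure S TY) :
    IsLeftQuillen TX TY (Under.pushout f) := by
  refine ⟨fun g hg ↦ ?_, fun g hg hgW ↦ ?_⟩
  · rw [hTY.2.2]
    exact ModelStructure.cof_of_isPushout (Under.isPushout_pushout_map f g) ((hTX.2.2 g).1 hg)
  · obtain ⟨hcof, hW⟩ := ModelStructure.trivCof_of_isPushout (Under.isPushout_pushout_map f g)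
      ((hTX.2.2 g).1 hg) ((hTX.1 g).1 hgW)
    exact ⟨(hTY.2.2 _).2 hcof, (hTY.1 _).2 hW⟩

lemma LeftProper.w_pushout_inl [HasPushouts M] {S : ModelStructure M} (hproper : LeftProper S)
    {X Y A : M} {f : X ⟶ Y} (hf : S.W f) {c : X ⟶ A} (hc : S.Cof c) : S.W (pushout.inl c f) :=
  hproper f c _ _ (IsPushout.of_hasPushout c f).flip hf hc

/-- In a left proper model category `M` (with pushouts, so that the
left adjoints exist, and a terminal object, so that fibrancy makes sense), for any
weak equivalence `f : X ⟶ Y`, the adjunction `P_f : X/M ⇄ Y/M : U_f` — where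
`P_f = Under.pushout f` is pushout along `f`, `U_f = Under.map f` is precomposition
with `f`, and the under categories carry the comma model structures — is a Quillen
equivalence: it is a Quillen adjunction, and for every cofibrant `A` in `X/M`,
fibrant `B` in `Y/M` and morphism `g : P_f A ⟶ B`, `g` is a weak equivalence iff its
adjunct `A ⟶ U_f B` is one.  (An object `A` of `X/M` is cofibrant iff `X ⟶ A` is a
cofibration in `M`; an object `B` is fibrant iff `B ⟶ *` is a fibration in `M`.) -/
theorem stmt_11 [HasPushouts M] [HasTerminal M]
    (S : ModelStructure M) (hproper : LeftProper S)
    {X Y : M} (f : X ⟶ Y) (hf : S.W f)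
    (TX : ModelStructure (Under X)) (hTX : IsCommaStructure S TX)
    (TY : ModelStructure (Under Y)) (hTY : IsCommaStructure S TY) :
    IsLeftQuillen TX TY (Under.pushout f) ∧
    ∀ (A : Under X) (B : Under Y),
      S.Cof A.hom → S.Fib (terminal.from B.right) →
      ∀ g : (Under.pushout f).obj A ⟶ B,
        TY.W g ↔ TX.W ((Under.mapPushoutAdj f).homEquiv A B g) := by
  refine ⟨isLeftQuillen_under_pushout f hTX hTY, fun A B hA _ g ↦ ?_⟩
  rw [hTY.1, hTX.1, Under.mapPushoutAdj_homEquiv_right]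
  exact S.w_right_iff_w_comp (hproper.w_pushout_inl hf hA) g.right
end
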